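/- Let I be a consistently-refined-typed instance of SRTI in which every type's preference ordering over types is strict (no type is indifferent between two distinct types). Then all stable matchings of I (if any exist) have the same cardinality. -/

import Mathlib

/-!
Only type-level preferences matter: a stable matching is also stable for the coarse instance in
which each agent ranks the others by type. As preferences over types are strict, an agent is
indifferent between two acceptable agents only if they have the same type, and then swapping them
is a symmetry of the coarse instance. So if an agent is matched by the stable matchings `M` and
`M'` to distinct partners it is indifferent between, conjugating `M'` by the swap of these two
partners gives a stable matching of the same size agreeing with `M` on more agents; by induction
we may assume there is no such agent. Then the stable roommates argument applies: `M'` maps the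
agents preferring `M'` to `M` injectively into those preferring `M` to `M'` (else there is a
blocking pair for `M`), and `M` maps them back, so the first map is onto. An agent matched by `M`
but not by `M'` prefers `M`, yet is not `M'`-matched, so it is not in the image.
-/

namespace StableRoommates

open Finset Function

variable {α β : Type*} (r : α → α → β) (t : α → β)

section

variable [LinearOrder β]

/-- `r a b` is `a`'s rank of `b` (smaller is better) and `b` is acceptable to `a` iff
`r a b < t a`; a matching is an involution, `M a = a` meaning that `a` is unmatched. -/
def IsStable [DecidableEq α] (M : α → α) : Prop :=
  ¬ ∃ a b : α, a ≠ b ∧ M a ≠ b ∧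
    (if M a = a then r a b < t a else r a b < r a (M a)) ∧
    (if M b = b then r b a < t b else r b a < r b (M b))

def IsAcceptable (M : α → α) : Prop :=
  ∀ a, M a ≠ a → r a (M a) < t a

def Prefers (N N' : α → α) (a : α) : Prop :=
  N a ≠ a ∧ (N' a = a ∨ r a (N a) < r a (N' a))

end

def NoTiedPartners (M M' : α → α) : Prop :=
  ∀ a, M a ≠ a → M' a ≠ a → M a ≠ M' a → r a (M a) ≠ r a (M' a)

variable {r} in
theorem NoTiedPartners.symm {M M' : α → α} (h : NoTiedPartners r M M') :
    NoTiedPartners r M' M :=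
  fun a ha ha' hne => (h a ha' ha hne.symm).symm

def IsAutomorphism (σ : Equiv.Perm α) : Prop :=
  (∀ x y, r (σ x) (σ y) = r x y) ∧ ∀ x, t (σ x) = t x

theorem isAutomorphism_swap_of_apply_eq [DecidableEq α] {γ : Type*} (f : α → γ)
    (R : γ → γ → β) (T : γ → β) {b c : α} (h : f b = f c) :
    IsAutomorphism (fun x y => R (f x) (f y)) (fun x => T (f x)) (Equiv.swap b c) :=
  ⟨fun x y => by simp only [Equiv.apply_swap_eq_self h], fun x => by
    simp only [Equiv.apply_swap_eq_self h]⟩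

variable [LinearOrder β] {r t}

theorem IsStable.of_refines [DecidableEq α] {r' : α → α → β} {t' : α → β} {M : α → α}
    (hlt : ∀ a b c, b ≠ a → c ≠ a → r' a b < r' a c → r a b < r a c)
    (hthr : ∀ a b, b ≠ a → r' a b < t' a → r a b < t a) (hM : IsStable r t M) :
    IsStable r' t' M := by
  have side : ∀ a b, a ≠ b → (if M a = a then r' a b < t' a else r' a b < r' a (M a)) →
      (if M a = a then r a b < t a else r a b < r a (M a)) := by
    intro a b hab h
    split_ifs at h ⊢ with ha
    · exact hthr a b hab.symm h
    · exact hlt a b (M a) hab.symm ha h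
  rintro ⟨a, b, hab, hMab, ha, hb⟩
  exact hM ⟨a, b, hab, hMab, side a b hab ha, side b a hab.symm hb⟩

section conj

variable {σ : Equiv.Perm α} {M : α → α}

theorem IsStable.conj [DecidableEq α] (hσ : IsAutomorphism r t σ) (hM : IsStable r t M) :
    IsStable r t (σ.conj M) := by
  rintro ⟨a, b, hab, hMab, ha, hb⟩
  obtain ⟨a, rfl⟩ := σ.surjective a
  obtain ⟨b, rfl⟩ := σ.surjective b
  simp only [Equiv.conj_apply, Equiv.symm_apply_apply, σ.apply_eq_iff_eq, ne_eq, hσ.1,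
    hσ.2] at hab hMab ha hb
  exact hM ⟨a, b, hab, hMab, ha, hb⟩

theorem IsAcceptable.conj (hσ : IsAutomorphism r t σ) (hM : IsAcceptable r t M) :
    IsAcceptable r t (σ.conj M) := by
  intro a ha
  obtain ⟨a, rfl⟩ := σ.surjective a
  simp only [Equiv.conj_apply, Equiv.symm_apply_apply, σ.apply_eq_iff_eq, ne_eq, hσ.1,
    hσ.2] at ha ⊢
  exact hM a ha

theorem _root_.Function.Involutive.conj (hM : Involutive M) : Involutive (σ.conj M) := by
  intro a
  simp only [Equiv.conj_apply, Equiv.symm_apply_apply, hM (σ.symm a), Equiv.apply_symm_apply]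

theorem card_filter_conj_ne_self [Fintype α] [DecidableEq α] :
    #{a | σ.conj M a ≠ a} = #{a | M a ≠ a} :=
  card_equiv σ.symm fun a => by simp [Equiv.conj_apply, σ.eq_symm_apply]

end conj

theorem card_disagree_conj_swap_lt [Fintype α] [DecidableEq α] {M M' : α → α}
    (hM : Involutive M) (hM' : Involutive M') {a : α} (ha : M a ≠ a) (ha' : M' a ≠ a)
    (hne : M a ≠ M' a) :
    #{x | M x ≠ (Equiv.swap (M a) (M' a)).conj M' x} < #{x | M x ≠ M' x} := by
  set σ := Equiv.swap (M a) (M' a)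
  have hσ : σ.symm = σ := Equiv.symm_swap _ _
  -- An agent on which `M` and `M'` agree is not swapped, and neither is its partner.
  have agree : ∀ x, M x = M' x → σ.conj M' x = M' x := by
    intro x hx
    have hxa : x ≠ a := fun h => hne (h ▸ hx)
    have hσx : σ.symm x = x := by
      rw [hσ]
      refine Equiv.swap_apply_of_ne_of_ne ?_ ?_ <;> rintro rfl
      · exact hne (hM'.injective (hx.symm.trans ((hM a).trans (hM' a).symm)))
      · exact hne (hM.injective ((hM a).trans ((hM' a).symm.trans hx.symm)))
    have hσM'x : σ (M' x) = M' x := by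
      refine Equiv.swap_apply_of_ne_of_ne ?_ ?_ <;> intro h
      · exact hxa (hM.injective (hx.trans h))
      · exact hxa (hM'.injective h)
    rw [Equiv.conj_apply, hσx, hσM'x]
  have fixed : σ.conj M' a = M a := by
    rw [Equiv.conj_apply, hσ, Equiv.swap_apply_of_ne_of_ne ha.symm ha'.symm,
      Equiv.swap_apply_right]
  refine card_lt_card (ssubset_iff_of_subset ?_ |>.mpr ⟨a, ?_, ?_⟩)
  · intro x
    simp only [mem_filter, mem_univ, true_and]
    exact mt fun hx => hx.trans (agree x hx).symm
  · simpa using hne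
  · simpa using fixed.symm

section exchange

variable [DecidableEq α] {M M' : α → α}

/-- Otherwise `(a, M' a)` would block `M`. -/
theorem Prefers.apply_partner (hM : Involutive M) (hM' : Involutive M')
    (hstab : IsStable r t M) (hacc' : IsAcceptable r t M') (hties : NoTiedPartners r M M')
    {a : α} (ha : Prefers r M' M a) : Prefers r M M' (M' a) := by
  obtain ⟨hab, hpref⟩ := ha
  set b := M' a
  have hba : M' b = a := hM' a
  have hMab : M a ≠ b := by
    intro h
    rcases hpref with h' | h'
    · exact hab (h.symm.trans h')
    · exact (h ▸ h').false
  by_contra hb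
  simp only [Prefers, hba, not_and, not_or, not_lt] at hb
  refine hstab ⟨a, b, hab.symm, hMab, ?_, ?_⟩
  · split_ifs with hMa
    · exact hacc' a hab
    · exact hpref.resolve_left hMa
  · split_ifs with hMb
    · exact hba ▸ hacc' b (hba ▸ hab.symm)
    · have hMba : M b ≠ a := fun h => hMab (h ▸ hM b)
      refine lt_of_le_of_ne (hb hMb).2 fun h => ?_
      exact hties b hMb (hba ▸ hab.symm) (hba ▸ hMba) (hba ▸ h.symm)

theorem filter_ne_self_subset_of_noTiedPartners [Fintype α] (hM : Involutive M)
    (hM' : Involutive M') (hstab : IsStable r t M) (hstab' : IsStable r t M')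
    (hacc : IsAcceptable r t M) (hacc' : IsAcceptable r t M') (hties : NoTiedPartners r M M') :
    ({a | M a ≠ a} : Finset α) ⊆ ({a | M' a ≠ a} : Finset α) := by
  classical
  set P : Finset α := {a | Prefers r M' M a}
  set Q : Finset α := {a | Prefers r M M' a}
  have hQP : #Q ≤ #P := card_le_card_of_injOn M
    (fun a ha => by simpa [P, Q] using (Prefers.apply_partner hM' hM hstab' hacc hties.symm
      (by simpa [Q] using ha))) hM.injective.injOn
  have himage : P.image M' = Q := by
    refine eq_of_subset_of_card_le (image_subset_iff.2 fun a ha => ?_) ?_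
    · simpa [P, Q] using Prefers.apply_partner hM hM' hstab hacc' hties (by simpa [P] using ha)
    · rwa [card_image_of_injective _ hM'.injective]
  intro a ha
  simp only [mem_filter, mem_univ, true_and] at ha ⊢
  by_contra! ha'
  have haQ : a ∈ Q := mem_filter.2 ⟨mem_univ a, ha, Or.inl ha'⟩
  obtain ⟨p, hp, rfl⟩ := mem_image.1 (himage ▸ haQ)
  simp only [P, mem_filter, mem_univ, true_and] at hp
  exact hp.1 (by rw [← ha', hM' p])

end exchange

theorem card_filter_ne_self_eq_of_ties_symmetric [Fintype α] [DecidableEq α]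
    (htie : ∀ a b c, r a b = r a c → r a b < t a → IsAutomorphism r t (Equiv.swap b c))
    {M M' : α → α} (hM : Involutive M) (hM' : Involutive M')
    (hstab : IsStable r t M) (hstab' : IsStable r t M')
    (hacc : IsAcceptable r t M) (hacc' : IsAcceptable r t M') :
    #{a | M a ≠ a} = #{a | M' a ≠ a} := by
  induction hn : #{x | M x ≠ M' x} using Nat.strong_induction_on generalizing M' with
  | _ n ih =>
  by_cases hties : NoTiedPartners r M M'
  · exact le_antisymm
      (card_le_card (filter_ne_self_subset_of_noTiedPartners hM hM' hstab hstab' hacc hacc' hties))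
      (card_le_card (filter_ne_self_subset_of_noTiedPartners hM' hM hstab' hstab hacc' hacc
        hties.symm))
  · simp only [NoTiedPartners, not_forall, not_not] at hties
    obtain ⟨a, ha, ha', hne, htied⟩ := hties
    have hσ := htie a (M a) (M' a) htied (hacc a ha)
    exact (ih _ (hn ▸ card_disagree_conj_swap_lt hM hM' ha ha' hne) (Involutive.conj hM')
      (hstab'.conj hσ) (hacc'.conj hσ) rfl).trans card_filter_conj_ne_self

end StableRoommates

theorem refined_typed_srti_strict_same_size_general
    {Agent : Type} [Fintype Agent] [DecidableEq Agent]
    (k : ℕ) (typeOf : Agent → ℕ) (htype : ∀ a, typeOf a < k)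
    (trank : ℕ → ℕ → ℕ)
    (arank : Agent → Agent → ℕ) (dthr : Agent → ℕ)
    (hcross : ∀ x z w, z ≠ x → w ≠ x → typeOf z ≠ typeOf w →
        (arank x z < arank x w ↔ trank (typeOf x) (typeOf z) < trank (typeOf x) (typeOf w)))
    (hdummy : ∀ x z, z ≠ x →
        (arank x z < dthr x ↔ trank (typeOf x) (typeOf z) < trank (typeOf x) k))
    -- preferences over types are strict
    (hstrict : ∀ i j l, i < k → j < k → l < k → j ≠ l →
        trank i j < trank i k → trank i l < trank i k → trank i j ≠ trank i l)
    (M M' : Agent → Agent)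
    (hinv : ∀ a, M (M a) = a) (hinv' : ∀ a, M' (M' a) = a)
    (hacc : ∀ a, M a ≠ a → arank a (M a) < dthr a)
    (hacc' : ∀ a, M' a ≠ a → arank a (M' a) < dthr a)
    (hstab : ¬ ∃ a b : Agent, a ≠ b ∧ M a ≠ b ∧
        (if M a = a then arank a b < dthr a else arank a b < arank a (M a)) ∧
        (if M b = b then arank b a < dthr b else arank b a < arank b (M b)))
    (hstab' : ¬ ∃ a b : Agent, a ≠ b ∧ M' a ≠ b ∧
        (if M' a = a then arank a b < dthr a else arank a b < arank a (M' a)) ∧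
        (if M' b = b then arank b a < dthr b else arank b a < arank b (M' b))) :
    (Finset.univ.filter fun a => M a ≠ a).card =
      (Finset.univ.filter fun a => M' a ≠ a).card := by
  set r : Agent → Agent → ℕ := fun a b => trank (typeOf a) (typeOf b)
  set t : Agent → ℕ := fun a => trank (typeOf a) k
  have hlt : ∀ a b c, b ≠ a → c ≠ a → r a b < r a c → arank a b < arank a c :=
    fun a b c hb hc h => (hcross a b c hb hc fun he => by simp [r, he] at h).2 h
  have hthr : ∀ a b, b ≠ a → r a b < t a → arank a b < dthr a :=
    fun a b hb => (hdummy a b hb).2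
  have htie_type : ∀ a b c, r a b = r a c → r a b < t a → typeOf b = typeOf c := by
    intro a b c heq hb
    by_contra hbc
    exact hstrict _ _ _ (htype a) (htype b) (htype c) hbc hb (by rwa [heq] at hb) heq
  open StableRoommates in
  exact card_filter_ne_self_eq_of_ties_symmetric (r := r) (t := t)
    (fun a b c heq hb =>
      isAutomorphism_swap_of_apply_eq typeOf trank (trank · k) (htie_type a b c heq hb))
    hinv hinv' (IsStable.of_refines hlt hthr hstab) (IsStable.of_refines hlt hthr hstab')
    (fun a ha => (hdummy a _ ha).1 (hacc a ha)) (fun a ha => (hdummy a _ ha).1 (hacc' a ha))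

/-- In a consistently-refined-typed instance of SRTI in which every
type's preference ordering over types is strict (no type is indifferent between two
distinct acceptable types), all stable matchings have the same cardinality. -/
theorem refined_typed_srti_strict_same_size
    {Agent : Type} [Fintype Agent] [DecidableEq Agent]
    (k : ℕ) (typeOf : Agent → ℕ) (htype : ∀ a, typeOf a < k)
    (trank : ℕ → ℕ → ℕ)
    (arank : Agent → Agent → ℕ) (dthr : Agent → ℕ)
    (hsame : ∀ x y z, typeOf x = typeOf y → z ≠ x → z ≠ y → arank x z = arank y z)
    (hsamed : ∀ x y, typeOf x = typeOf y → dthr x = dthr y)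
    (hcross : ∀ x z w, z ≠ x → w ≠ x → typeOf z ≠ typeOf w →
        (arank x z < arank x w ↔ trank (typeOf x) (typeOf z) < trank (typeOf x) (typeOf w)))
    (hdummy : ∀ x z, z ≠ x →
        (arank x z < dthr x ↔ trank (typeOf x) (typeOf z) < trank (typeOf x) k))
    -- preferences over types are strict
    (hstrict : ∀ i j l, i < k → j < k → l < k → j ≠ l →
        trank i j < trank i k → trank i l < trank i k → trank i j ≠ trank i l)
    (M M' : Agent → Agent)
    (hinv : ∀ a, M (M a) = a) (hinv' : ∀ a, M' (M' a) = a)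
    (hacc : ∀ a, M a ≠ a → arank a (M a) < dthr a)
    (hacc' : ∀ a, M' a ≠ a → arank a (M' a) < dthr a)
    (hstab : ¬ ∃ a b : Agent, a ≠ b ∧ M a ≠ b ∧
        (if M a = a then arank a b < dthr a else arank a b < arank a (M a)) ∧
        (if M b = b then arank b a < dthr b else arank b a < arank b (M b)))
    (hstab' : ¬ ∃ a b : Agent, a ≠ b ∧ M' a ≠ b ∧
        (if M' a = a then arank a b < dthr a else arank a b < arank a (M' a)) ∧
        (if M' b = b then arank b a < dthr b else arank b a < arank b (M' b))) :
    (Finset.univ.filter fun a => M a ≠ a).card =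
      (Finset.univ.filter fun a => M' a ≠ a).card :=
  refined_typed_srti_strict_same_size_general k typeOf htype trank arank dthr hcross hdummy hstrict
    M M' hinv hinv' hacc hacc' hstab hstab'
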